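/- Let l, n be positive integers, let A be a real l×n matrix with A Aᵀ equal to the l×l identity matrix, let x̂ ∈ ℝⁿ satisfy ‖x̂‖ < 1, and set b = A x̂. Then there exists v* > 0 such that for every x ∈ ℝⁿ with ‖x‖ = 1 and ⟨x, Aᵀ(Ax − b)⟩ ≤ 0, and every y ∈ ℝ^l, one has ⟨y, A(I_n − x xᵀ)Aᵀ y⟩ ≥ v* ‖y‖². -/

import Mathlib

/-!
Write `T` for the map `x ↦ A x`. Since `A Aᵀ = 1`, its adjoint `y ↦ Aᵀ y` is an isometry, so `T` is
a contraction.
The sign condition reads `⟪T x, T x - b⟫ ≤ 0`, which forces `‖T x‖ ≤ ‖b‖ ≤ ‖x̂‖`. The quadratic form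
equals `‖Aᵀ y‖² - ⟪T x, y⟫² = ‖y‖² - ⟪T x, y⟫² ≥ (1 - ‖x̂‖²) ‖y‖²`, so `v* = 1 - ‖x̂‖²` works.
-/

open Matrix

namespace LinearMap

variable {𝕜 E F : Type*} [RCLike 𝕜] [NormedAddCommGroup E] [InnerProductSpace 𝕜 E]
  [NormedAddCommGroup F] [InnerProductSpace 𝕜 F] [FiniteDimensional 𝕜 E] [FiniteDimensional 𝕜 F]
  {T : E →ₗ[𝕜] F}

theorem norm_adjoint_apply_of_comp_adjoint_eq_id (hT : T ∘ₗ T.adjoint = id) (u : F) :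
    ‖T.adjoint u‖ = ‖u‖ := by
  refine (norm_map_iff_inner_map_map T.adjoint).mpr (fun u v => ?_) u
  rw [adjoint_inner_right, ← comp_apply, hT, id_apply]

theorem norm_apply_le_of_comp_adjoint_eq_id (hT : T ∘ₗ T.adjoint = id) (z : E) :
    ‖T z‖ ≤ ‖z‖ := by
  have key : ‖T z‖ ^ 2 ≤ ‖z‖ * ‖T z‖ :=
    calc ‖T z‖ ^ 2 = ‖(inner 𝕜 z (T.adjoint (T z)) : 𝕜)‖ := by
          rw [adjoint_inner_right, inner_self_eq_norm_sq_to_K]; norm_cast; simp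
      _ ≤ ‖z‖ * ‖T.adjoint (T z)‖ := norm_inner_le_norm _ _
      _ = ‖z‖ * ‖T z‖ := by rw [norm_adjoint_apply_of_comp_adjoint_eq_id hT]
  nlinarith [norm_nonneg (T z), norm_nonneg z]

end LinearMap

theorem norm_le_of_real_inner_sub_nonpos {E : Type*} [NormedAddCommGroup E]
    [InnerProductSpace ℝ E] {u v : E} (h : inner ℝ u (u - v) ≤ 0) : ‖u‖ ≤ ‖v‖ := by
  rw [inner_sub_right, real_inner_self_eq_norm_sq] at h
  nlinarith [real_inner_le_norm u v, norm_nonneg u, norm_nonneg v]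

namespace Matrix

variable {m n : Type*} [Fintype m] [Fintype n] [DecidableEq m] [DecidableEq n]

theorem toEuclideanLin_transpose_eq_adjoint (A : Matrix m n ℝ) :
    toEuclideanLin Aᵀ = (toEuclideanLin A).adjoint := by
  rw [← conjTranspose_eq_transpose_of_trivial, toEuclideanLin_conjTranspose_eq_adjoint]

theorem toEuclideanLin_comp_adjoint_eq_id {A : Matrix m n ℝ} (hA : A * Aᵀ = 1) :
    toEuclideanLin A ∘ₗ (toEuclideanLin A).adjoint = LinearMap.id := by
  rw [← toEuclideanLin_transpose_eq_adjoint, ← toLpLin_mul_same, hA, toLpLin_one]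

theorem toEuclideanLin_vecMulVec_self_apply (x w : EuclideanSpace ℝ n) :
    toEuclideanLin (vecMulVec x x) w = inner ℝ x w • x := by
  ext i
  simp [toLpLin_apply, mulVec, vecMulVec, dotProduct, PiLp.inner_apply, Finset.mul_sum,
    mul_comm, mul_assoc]

theorem inner_toEuclideanLin_mul_one_sub_vecMulVec_mul_transpose (A : Matrix m n ℝ)
    (x : EuclideanSpace ℝ n) (y : EuclideanSpace ℝ m) :
    inner ℝ y (toEuclideanLin (A * (1 - vecMulVec x x) * Aᵀ) y) =
      ‖toEuclideanLin Aᵀ y‖ ^ 2 - inner ℝ (toEuclideanLin A x) y ^ 2 := by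
  rw [toLpLin_mul_same, toLpLin_mul_same, toEuclideanLin_transpose_eq_adjoint,
    LinearMap.comp_apply, LinearMap.comp_apply,
    ← LinearMap.adjoint_inner_left (toEuclideanLin A), ← LinearMap.adjoint_inner_right _ x y]
  generalize (toEuclideanLin A).adjoint y = w
  simp only [map_sub, LinearMap.sub_apply, toLpLin_one, LinearMap.id_apply,
    toEuclideanLin_vecMulVec_self_apply, inner_sub_right, inner_smul_right,
    real_inner_self_eq_norm_sq, real_inner_comm x w]
  ring

end Matrix

theorem ball_regularity_uniform_posdef_general
    (l n : ℕ)
    (A : Matrix (Fin l) (Fin n) ℝ) (hA : A * Aᵀ = 1)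
    (xhat : EuclideanSpace ℝ (Fin n)) (hxhat : ‖xhat‖ < 1)
    (b : EuclideanSpace ℝ (Fin l)) (hb : b = Matrix.toEuclideanLin A xhat) :
    ∃ vstar : ℝ, 0 < vstar ∧
      ∀ x : EuclideanSpace ℝ (Fin n), ‖x‖ = 1 →
        (inner ℝ x (Matrix.toEuclideanLin Aᵀ (Matrix.toEuclideanLin A x - b)) : ℝ) ≤ 0 →
        ∀ y : EuclideanSpace ℝ (Fin l),
          (inner ℝ y (Matrix.toEuclideanLin (A * (1 - Matrix.vecMulVec x x) * Aᵀ) y) : ℝ) ≥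
            vstar * ‖y‖ ^ 2 := by
  have hT := toEuclideanLin_comp_adjoint_eq_id hA
  refine ⟨1 - ‖xhat‖ ^ 2, by nlinarith [norm_nonneg xhat], fun x _ hsign y => ?_⟩
  rw [toEuclideanLin_transpose_eq_adjoint, LinearMap.adjoint_inner_right] at hsign
  have hTx : ‖toEuclideanLin A x‖ ≤ ‖xhat‖ :=
    (norm_le_of_real_inner_sub_nonpos hsign).trans
      (hb ▸ LinearMap.norm_apply_le_of_comp_adjoint_eq_id hT xhat)
  have hcross : inner ℝ (toEuclideanLin A x) y ^ 2 ≤ (‖xhat‖ * ‖y‖) ^ 2 := by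
    rw [← sq_abs]
    gcongr
    exact (abs_real_inner_le_norm _ _).trans (by gcongr)
  rw [inner_toEuclideanLin_mul_one_sub_vecMulVec_mul_transpose, toEuclideanLin_transpose_eq_adjoint,
    LinearMap.norm_adjoint_apply_of_comp_adjoint_eq_id hT]
  nlinarith

/-- uniform positive lower bound `v* > 0` on the quadratic form
`⟨y, A(I − x xᵀ)Aᵀ y⟩ ≥ v*‖y‖²` over all unit vectors `x` with
`⟨x, Aᵀ(Ax − b)⟩ ≤ 0`, where `A Aᵀ = I` and `b = A x̂` with `‖x̂‖ < 1`. -/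
theorem ball_regularity_uniform_posdef
    (l n : ℕ) (hl : 0 < l) (hn : 0 < n)
    (A : Matrix (Fin l) (Fin n) ℝ) (hA : A * Aᵀ = 1)
    (xhat : EuclideanSpace ℝ (Fin n)) (hxhat : ‖xhat‖ < 1)
    (b : EuclideanSpace ℝ (Fin l)) (hb : b = Matrix.toEuclideanLin A xhat) :
    ∃ vstar : ℝ, 0 < vstar ∧
      ∀ x : EuclideanSpace ℝ (Fin n), ‖x‖ = 1 →
        (inner ℝ x (Matrix.toEuclideanLin Aᵀ (Matrix.toEuclideanLin A x - b)) : ℝ) ≤ 0 →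
        ∀ y : EuclideanSpace ℝ (Fin l),
          (inner ℝ y (Matrix.toEuclideanLin (A * (1 - Matrix.vecMulVec x x) * Aᵀ) y) : ℝ) ≥
            vstar * ‖y‖ ^ 2 :=
  ball_regularity_uniform_posdef_general l n A hA xhat hxhat b hb
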